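/- arXiv:2104.01516 — 5 statements merged into one kernel-verified Lean document; each statement's English description precedes it below -/
import Mathlib

section
/- Let H be a real Hilbert space, V a closed vector subspace of H, A: H → 2^H a maximally monotone operator, and γ > 0. Then the partial inverse (γA)_V of γA with respect to V, defined by y ∈ (γA)_V x ⇔ P_V y + P_{V⊥} x ∈ γA(P_V x + P_{V⊥} y), is maximally monotone. -/
open RealInnerProductSpace Pointwise

variable {H : Type*} [NormedAddCommGroup H] [InnerProductSpace ℝ H] [CompleteSpace H]

/-- A set-valued operator is monotone. -/
def MonotoneSV (A : H → Set H) : Prop :=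
  ∀ x y u v, u ∈ A x → v ∈ A y → 0 ≤ ⟪x - y, u - v⟫

/-- A set-valued operator is maximally monotone. -/
def MaxMonotoneSV (A : H → Set H) : Prop :=
  MonotoneSV A ∧ ∀ x u, (∀ y v, v ∈ A y → 0 ≤ ⟪x - y, u - v⟫) → u ∈ A x

/-- Partial inverse of `A` with respect to the closed subspace `V`. -/
noncomputable def partialInv (V : Submodule ℝ H) [CompleteSpace V] (A : H → Set H) :
    H → Set H := fun x =>
  {y | (Submodule.orthogonalProjectionOnto V y : H) + (Submodule.orthogonalProjectionOnto Vᗮ x : H)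
      ∈ A ((Submodule.orthogonalProjectionOnto V x : H) + (Submodule.orthogonalProjectionOnto Vᗮ y : H))}

/-! The map `(x, u) ↦ (P_V x + P_{V⊥} u, P_V u + P_{V⊥} x)` of `H × H` is an involution carrying
the graph of `A` onto the graph of `A_V`, and it preserves the pairing `⟪x - y, u - v⟫` of two
points `(x, u)`, `(y, v)`: before and after, the pairing is
`⟪P_V (x - y), P_V (u - v)⟫ + ⟪P_{V⊥} (x - y), P_{V⊥} (u - v)⟫`. So
monotonicity and maximality pass from `A` to `A_V`. Scaling by `γ > 0` scales every pairing by `γ`,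
so `γ A` is maximally monotone along with `A`. -/

section

variable {E : Type*} [NormedAddCommGroup E] [InnerProductSpace ℝ E]

namespace Submodule

theorem real_inner_add_add_of_mem_of_mem_orthogonal {K : Submodule ℝ E} {p q r s : E}
    (hp : p ∈ K) (hr : r ∈ K) (hq : q ∈ Kᗮ) (hs : s ∈ Kᗮ) : ⟪p + q, r + s⟫ = ⟪p, r⟫ + ⟪q, s⟫ := by
  rw [inner_add_left, inner_add_right, inner_add_right, inner_right_of_mem_orthogonal hp hs,
    inner_left_of_mem_orthogonal hr hq, add_zero, zero_add]

variable (K : Submodule ℝ E) [K.HasOrthogonalProjection]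

noncomputable def swapProj (x u : E) : E :=
  K.starProjection x + Kᗮ.starProjection u

theorem starProjection_swapProj (x u : E) :
    K.starProjection (K.swapProj x u) = K.starProjection x := by
  rw [swapProj, map_add, starProjection_eq_self_iff.2 (K.starProjection_apply_mem x),
    (starProjection_apply_eq_zero_iff K).2 (Kᗮ.starProjection_apply_mem u), add_zero]

theorem starProjection_orthogonal_swapProj (x u : E) :
    Kᗮ.starProjection (K.swapProj x u) = Kᗮ.starProjection u := by
  rw [swapProj, map_add, starProjection_orthogonal_apply_eq_zero (K.starProjection_apply_mem x),
    starProjection_eq_self_iff.2 (Kᗮ.starProjection_apply_mem u), zero_add]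

theorem swapProj_swapProj (x u : E) : K.swapProj (K.swapProj x u) (K.swapProj u x) = x := by
  rw [swapProj, starProjection_swapProj, starProjection_orthogonal_swapProj,
    starProjection_add_starProjection_orthogonal]

theorem swapProj_sub_swapProj (x u y v : E) :
    K.swapProj x u - K.swapProj y v = K.swapProj (x - y) (u - v) := by
  simp only [swapProj, map_sub]
  abel

theorem inner_swapProj_swapProj (a b : E) : ⟪K.swapProj a b, K.swapProj b a⟫ = ⟪a, b⟫ := by
  have hP (w : E) : K.starProjection w ∈ K := K.starProjection_apply_mem w
  have hQ (w : E) : Kᗮ.starProjection w ∈ Kᗮ := Kᗮ.starProjection_apply_mem w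
  conv_rhs => rw [← K.starProjection_add_starProjection_orthogonal a,
    ← K.starProjection_add_starProjection_orthogonal b]
  rw [swapProj, swapProj, real_inner_add_add_of_mem_of_mem_orthogonal (hP a) (hP b) (hQ b) (hQ a),
    real_inner_add_add_of_mem_of_mem_orthogonal (hP a) (hP b) (hQ a) (hQ b),
    real_inner_comm (Kᗮ.starProjection a)]

theorem inner_swapProj_sub_swapProj (x y u v : E) :
    ⟪K.swapProj x u - K.swapProj y v, K.swapProj u x - K.swapProj v y⟫ = ⟪x - y, u - v⟫ := by
  rw [swapProj_sub_swapProj, swapProj_sub_swapProj, inner_swapProj_swapProj]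

end Submodule

theorem mem_partialInv_iff (V : Submodule ℝ E) [CompleteSpace V] (A : E → Set E) (x u : E) :
    u ∈ partialInv V A x ↔ V.swapProj u x ∈ A (V.swapProj x u) :=
  Iff.rfl

theorem MonotoneSV.partialInv {A : E → Set E} (hA : MonotoneSV A) (V : Submodule ℝ E)
    [CompleteSpace V] : MonotoneSV (_root_.partialInv V A) := fun x y u v hu hv => by
  rw [← V.inner_swapProj_sub_swapProj]
  exact hA _ _ _ _ hu hv

theorem MaxMonotoneSV.partialInv {A : E → Set E} (hA : MaxMonotoneSV A) (V : Submodule ℝ E)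
    [CompleteSpace V] : MaxMonotoneSV (_root_.partialInv V A) := by
  refine ⟨hA.1.partialInv V, fun x u h => hA.2 _ _ fun y' v' hv' => ?_⟩
  have hmem : V.swapProj v' y' ∈ _root_.partialInv V A (V.swapProj y' v') := by
    rwa [mem_partialInv_iff, V.swapProj_swapProj, V.swapProj_swapProj]
  have hpair := h _ _ hmem
  rwa [← V.inner_swapProj_sub_swapProj, V.swapProj_swapProj, V.swapProj_swapProj] at hpair

theorem MonotoneSV.smul {A : E → Set E} (hA : MonotoneSV A) {γ : ℝ} (hγ : 0 ≤ γ) :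
    MonotoneSV (fun x => γ • A x) := by
  rintro x y _ _ ⟨u, hu, rfl⟩ ⟨v, hv, rfl⟩
  rw [← smul_sub, real_inner_smul_right]
  exact mul_nonneg hγ (hA x y u v hu hv)

theorem MaxMonotoneSV.smul {A : E → Set E} (hA : MaxMonotoneSV A) {γ : ℝ} (hγ : 0 < γ) :
    MaxMonotoneSV (fun x => γ • A x) := by
  refine ⟨hA.1.smul hγ.le, fun x u h =>
    ⟨γ⁻¹ • u, hA.2 x _ fun y v hv => ?_, smul_inv_smul₀ hγ.ne' u⟩⟩
  have hγv := h y (γ • v) ⟨v, hv, rfl⟩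
  rw [← smul_inv_smul₀ hγ.ne' u, ← smul_sub, real_inner_smul_right] at hγv
  exact nonneg_of_mul_nonneg_right hγv hγ

end

theorem partialInv_of_smul_maxMonotone (V : Submodule ℝ H) [CompleteSpace V]
    (A : H → Set H) (γ : ℝ) (hγ : 0 < γ) (hA : MaxMonotoneSV A) :
    MaxMonotoneSV (partialInv V (fun x => (γ • A x : Set H))) :=
  (hA.smul hγ).partialInv V
end

section
/- Let H be a real Hilbert space, V a closed vector subspace, A: H → 2^H maximally monotone, B: H → H monotone and L-Lipschitzian, C: H → H β-cocoercive, and γ > 0. Define A_γ = (γA)_V, B_γ = γ P_V ∘ B ∘ P_V, C_γ = γ P_V ∘ C ∘ P_V. Then a point x̂ ∈ H satisfies 0 ∈ A x̂ + B x̂ + C x̂ + N_V x̂ if and only if x̂ ∈ V and there exists ŷ ∈ V⊥ ∩ (A x̂ + B x̂ + C x̂) such that x̂ + γ(ŷ − P_{V⊥}(B+C)x̂) ∈ zer(A_γ + B_γ + C_γ). -/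
open RealInnerProductSpace Pointwise

variable {H : Type*} [NormedAddCommGroup H] [InnerProductSpace ℝ H] [CompleteSpace H]

/-- Normal cone to the closed subspace `V`. -/
def normalCone (V : Submodule ℝ H) : H → Set H := fun x =>
  {u | x ∈ V ∧ u ∈ Vᗮ}

/-!
Everything happens in the splitting `H = V ⊕ Vᗮ`: for `x, v ∈ V` and `u, w ∈ Vᗮ` one has
`v + w ∈ (γA)_V (x + u) ↔ v + u ∈ γA (x + w)`. Given a zero `x ∈ V` with `n ∈ Vᗮ`,
`y := -n` and `z := x + γ (y - P_{Vᗮ}(Bx + Cx))`, we have `P_V z = x`, and `-γ P_V (Bx + Cx)`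
lies in `(γA)_V z` because adding `γ (y - P_{Vᗮ}(Bx + Cx))` to it gives `γ (y - Bx - Cx) ∈ γ A x`;
this value cancels `B_γ z + C_γ z`.
-/

section PartialInverse

variable {E : Type*} [NormedAddCommGroup E] [InnerProductSpace ℝ E]
  {K : Submodule ℝ E} [K.HasOrthogonalProjection]

theorem coe_orthogonalProjectionOnto_add_of_mem_orthogonal {x u : E} (hx : x ∈ K) (hu : u ∈ Kᗮ) :
    (K.orthogonalProjectionOnto (x + u) : E) = x :=
  K.eq_starProjection_of_mem_orthogonal' hx hu rfl

theorem coe_orthogonalProjectionOnto_orthogonal_add_of_mem {x u : E} (hx : x ∈ K) (hu : u ∈ Kᗮ) :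
    (Kᗮ.orthogonalProjectionOnto (x + u) : E) = u := by
  rw [add_comm]
  exact coe_orthogonalProjectionOnto_add_of_mem_orthogonal hu (K.le_orthogonal_orthogonal hx)

variable {V : Submodule ℝ E} [CompleteSpace V]

theorem add_mem_partialInv_iff {A : E → Set E} {x u v w : E} (hx : x ∈ V) (hu : u ∈ Vᗮ)
    (hv : v ∈ V) (hw : w ∈ Vᗮ) :
    v + w ∈ partialInv V A (x + u) ↔ v + u ∈ A (x + w) := by
  simp only [partialInv, Set.mem_ofPred_eq,
    coe_orthogonalProjectionOnto_add_of_mem_orthogonal hx hu,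
    coe_orthogonalProjectionOnto_orthogonal_add_of_mem hx hu,
    coe_orthogonalProjectionOnto_add_of_mem_orthogonal hv hw,
    coe_orthogonalProjectionOnto_orthogonal_add_of_mem hv hw]

theorem neg_smul_orthogonalProjectionOnto_mem_partialInv_smul {A : E → Set E} {x y : E} (b : E)
    (γ : ℝ) (hx : x ∈ V) (hy : y ∈ Vᗮ) (hA : y - b ∈ A x) :
    -(γ • (V.orthogonalProjectionOnto b : E)) ∈
      partialInv V (fun z => γ • A z) (x + γ • (y - (Vᗮ.orthogonalProjectionOnto b : E))) := by
  have hv : -(γ • (V.orthogonalProjectionOnto b : E)) ∈ V :=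
    V.neg_mem (V.smul_mem γ (V.orthogonalProjectionOnto b).2)
  have hu : γ • (y - (Vᗮ.orthogonalProjectionOnto b : E)) ∈ Vᗮ :=
    Vᗮ.smul_mem γ (Vᗮ.sub_mem hy (Vᗮ.orthogonalProjectionOnto b).2)
  rw [← add_zero (-_), add_mem_partialInv_iff hx hu hv Vᗮ.zero_mem, add_zero]
  have hsplit := V.starProjection_add_starProjection_orthogonal b
  rw [V.starProjection_apply, Vᗮ.starProjection_apply] at hsplit
  convert Set.smul_mem_smul_set (a := γ) hA using 1
  linear_combination (norm := module) -γ • hsplit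

end PartialInverse

theorem solution_characterization_general (V : Submodule ℝ H) [CompleteSpace V]
    (A : H → Set H) (B C : H → H) (γ : ℝ)
    (xh : H) :
    (∃ a n, a ∈ A xh ∧ n ∈ normalCone V xh ∧ a + B xh + C xh + n = 0) ↔
    (xh ∈ V ∧ ∃ yh, yh ∈ Vᗮ ∧ yh - B xh - C xh ∈ A xh ∧
      (∃ a, a ∈ partialInv V (fun x => (γ • A x : Set H))
              (xh + γ • (yh - (Submodule.orthogonalProjectionOnto Vᗮ (B xh + C xh) : H))) ∧
        a + γ • (Submodule.orthogonalProjectionOnto V (B (Submodule.orthogonalProjectionOnto V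
              (xh + γ • (yh - (Submodule.orthogonalProjectionOnto Vᗮ (B xh + C xh) : H)))) ) : H)
          + γ • (Submodule.orthogonalProjectionOnto V (C (Submodule.orthogonalProjectionOnto V
              (xh + γ • (yh - (Submodule.orthogonalProjectionOnto Vᗮ (B xh + C xh) : H)))) ) : H) = 0)) := by
  constructor
  · rintro ⟨a, n, ha, ⟨hx, hn⟩, hsum⟩
    have hA : -n - (B xh + C xh) ∈ A xh := by
      convert ha using 1
      linear_combination (norm := module) -hsum
    have hu : γ • (-n - (Vᗮ.orthogonalProjectionOnto (B xh + C xh) : H)) ∈ Vᗮ :=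
      Vᗮ.smul_mem γ (Vᗮ.sub_mem (Vᗮ.neg_mem hn) (Vᗮ.orthogonalProjectionOnto _).2)
    refine ⟨hx, -n, Vᗮ.neg_mem hn, by rwa [sub_sub],
      _, neg_smul_orthogonalProjectionOnto_mem_partialInv_smul _ γ hx (Vᗮ.neg_mem hn) hA, ?_⟩
    rw [coe_orthogonalProjectionOnto_add_of_mem_orthogonal hx hu, map_add, Submodule.coe_add,
      smul_add]
    abel
  · rintro ⟨hx, y, hy, hA, -⟩
    exact ⟨y - B xh - C xh, -y, hA, ⟨hx, Vᗮ.neg_mem hy⟩, by abel⟩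

theorem solution_characterization (V : Submodule ℝ H) [CompleteSpace V]
    (A : H → Set H) (B C : H → H) (L β γ : ℝ) (hL : 0 < L) (hβ : 0 < β) (hγ : 0 < γ)
    (hA : MaxMonotoneSV A)
    (hBmon : ∀ x y, 0 ≤ ⟪x - y, B x - B y⟫)
    (hBlip : ∀ x y, ‖B x - B y‖ ≤ L * ‖x - y‖)
    (hC : ∀ x y, β * ‖C x - C y‖ ^ 2 ≤ ⟪x - y, C x - C y⟫)
    (xh : H) :
    (∃ a n, a ∈ A xh ∧ n ∈ normalCone V xh ∧ a + B xh + C xh + n = 0) ↔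
    (xh ∈ V ∧ ∃ yh, yh ∈ Vᗮ ∧ yh - B xh - C xh ∈ A xh ∧
      (∃ a, a ∈ partialInv V (fun x => (γ • A x : Set H))
              (xh + γ • (yh - (Submodule.orthogonalProjectionOnto Vᗮ (B xh + C xh) : H))) ∧
        a + γ • (Submodule.orthogonalProjectionOnto V (B (Submodule.orthogonalProjectionOnto V
              (xh + γ • (yh - (Submodule.orthogonalProjectionOnto Vᗮ (B xh + C xh) : H)))) ) : H)
          + γ • (Submodule.orthogonalProjectionOnto V (C (Submodule.orthogonalProjectionOnto V
              (xh + γ • (yh - (Submodule.orthogonalProjectionOnto Vᗮ (B xh + C xh) : H)))) ) : H) = 0)) :=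
  solution_characterization_general V A B C γ xh
end

section
/- Let H be a real Hilbert space, V a closed vector subspace, A: H → 2^H maximally monotone, γ > 0, λ > 0, and z ∈ H. Then s = J_{λ(γA)_V} z if and only if there exist p, q ∈ H with z = p + γq, (P_V q)/λ + P_{V⊥} q ∈ A(P_V p + (P_{V⊥} p)/λ), and s = P_V p + γ P_{V⊥} q. -/
open RealInnerProductSpace Pointwise

variable {H : Type*} [NormedAddCommGroup H] [InnerProductSpace ℝ H] [CompleteSpace H]

/-!
Write `P = P_V` and `Q = Id - P = P_{V⊥}`. The relation `z - s ∈ λ (γA)_V s` says `z = s + λ w`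
and `P w + Q s = γ y` for some `y ∈ A (P s + Q w)`. The linear change of variables
`p = P s + λ Q w`, `q = λ P y + Q y` turns this into the stated form and back.
-/

theorem LinearMap.sub_mem_smul_partialInv_iff {K M : Type*} [Field K] [AddCommGroup M]
    [Module K M] {P : M →ₗ[K] M} (hP : IsIdempotentElem P) (A : M → Set M) (γ : K) {lam : K}
    (hlam : lam ≠ 0) (z s : M) :
    z - s ∈ lam • {w | P w + (s - P s) ∈ γ • A (P s + (w - P w))} ↔
    ∃ p q, z = p + γ • q ∧ lam⁻¹ • P q + (q - P q) ∈ A (P p + lam⁻¹ • (p - P p)) ∧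
      s = P p + γ • (q - P q) := by
  have hPP (x : M) : P (P x) = P x := LinearMap.congr_fun hP.eq x
  constructor
  · rintro ⟨w, ⟨y, hy, hyw⟩, hzs⟩
    obtain rfl : lam • w + s = z := eq_sub_iff_add_eq.mp hzs
    have hPy : γ • P y = P w := by simpa [hPP] using congrArg P hyw
    refine ⟨P s + lam • (w - P w), lam • P y + (y - P y), ?_, ?_, ?_⟩
    · linear_combination (norm := module) (1 - lam) • hPy - hyw
    · simp only [map_add, map_sub, map_smul, hPP]
      convert hy using 2 <;> match_scalars <;> field_simp <;> ring
    · simp only [map_add, map_sub, map_smul, hPP]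
      linear_combination (norm := module) hPy - hyw
  · rintro ⟨p, q, rfl, hq, rfl⟩
    refine ⟨lam⁻¹ • (p - P p + γ • P q), ⟨lam⁻¹ • P q + (q - P q), ?_, ?_⟩, ?_⟩
    · convert hq using 2
      simp only [map_add, map_sub, map_smul, hPP]
      module
    · simp only [map_add, map_sub, map_smul, hPP]
      module
    · simp only [smul_inv_smul₀ hlam]
      module

/-- The left-hand side is the defining relation of `s = J_{λ (γA)_V} z`. -/
theorem resolvent_partialInv_characterization_general (V : Submodule ℝ H) [CompleteSpace V]
    (A : H → Set H) (γ lam : ℝ) (hlam : 0 < lam)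
    (z s : H) :
    z - s ∈ (lam • partialInv V (fun x => (γ • A x : Set H)) s : Set H) ↔
    ∃ p q : H, z = p + γ • q ∧
      lam⁻¹ • (Submodule.orthogonalProjectionOnto V q : H) + (Submodule.orthogonalProjectionOnto Vᗮ q : H)
        ∈ A ((Submodule.orthogonalProjectionOnto V p : H) + lam⁻¹ • (Submodule.orthogonalProjectionOnto Vᗮ p : H)) ∧
      s = (Submodule.orthogonalProjectionOnto V p : H) + γ • (Submodule.orthogonalProjectionOnto Vᗮ q : H) := by
  simp only [partialInv, Submodule.coe_orthogonalProjectionOnto_apply,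
    Submodule.starProjection_orthogonal_val]
  exact LinearMap.sub_mem_smul_partialInv_iff
    (ContinuousLinearMap.IsIdempotentElem.toLinearMap V.isIdempotentElem_starProjection) A γ
    hlam.ne' z s

/-- `s = J_{λ (γA)_V} z`, expressed through the defining relation
`z - s ∈ λ • (γA)_V s`, holds iff `s` has the announced explicit form. -/
theorem resolvent_partialInv_characterization (V : Submodule ℝ H) [CompleteSpace V]
    (A : H → Set H) (hA : MaxMonotoneSV A) (γ lam : ℝ) (hγ : 0 < γ) (hlam : 0 < lam)
    (z s : H) :
    z - s ∈ (lam • partialInv V (fun x => (γ • A x : Set H)) s : Set H) ↔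
    ∃ p q : H, z = p + γ • q ∧
      lam⁻¹ • (Submodule.orthogonalProjectionOnto V q : H) + (Submodule.orthogonalProjectionOnto Vᗮ q : H)
        ∈ A ((Submodule.orthogonalProjectionOnto V p : H) + lam⁻¹ • (Submodule.orthogonalProjectionOnto Vᗮ p : H)) ∧
      s = (Submodule.orthogonalProjectionOnto V p : H) + γ • (Submodule.orthogonalProjectionOnto Vᗮ q : H) :=
  resolvent_partialInv_characterization_general V A γ lam hlam z s
end

section
/- Let H and G₁,...,G_m be real Hilbert spaces, M: H → H monotone and μ-Lipschitzian, and for each i let N_i^{-1}: G_i → G_i be monotone and ν_i-Lipschitzian, and L_i: H → G_i bounded linear. Then the operator B on the product space H ⊕ G₁ ⊕ ... ⊕ G_m defined by B(x, u₁,...,u_m) = (Mx + Σ_i L_i* u_i, N₁^{-1}u₁ − L₁x, ..., N_m^{-1}u_m − L_m x) is monotone and L-Lipschitzian with L = max{μ, ν₁,...,ν_m} + √(Σ_i ‖L_i‖²). -/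
/-!
`B` splits as the block-diagonal operator `(x, u) ↦ (M x, (Nᵢ⁻¹ uᵢ)ᵢ)`, which is monotone and
`max {μ, νᵢ}`-Lipschitz componentwise, plus the bounded linear operator
`S (x, u) = (Σᵢ Lᵢ* uᵢ, (-Lᵢ x)ᵢ)`. The operator `S` is skew, so `⟪z, S z⟫ = 0`, and
Cauchy–Schwarz over the blocks gives `‖S‖ ≤ √(Σᵢ ‖Lᵢ‖²)`.
-/

open RealInnerProductSpace

theorem norm_sum_apply_sq_le {ι E : Type*} [Fintype ι] {F : ι → Type*} [SeminormedAddCommGroup E]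
    [NormedSpace ℝ E] [∀ i, SeminormedAddCommGroup (F i)] [∀ i, NormedSpace ℝ (F i)]
    (A : ∀ i, F i →L[ℝ] E) (u : ∀ i, F i) :
    ‖∑ i, A i (u i)‖ ^ 2 ≤ (∑ i, ‖A i‖ ^ 2) * ∑ i, ‖u i‖ ^ 2 := by
  have hle : ‖∑ i, A i (u i)‖ ≤ ∑ i, ‖A i‖ * ‖u i‖ :=
    (norm_sum_le _ _).trans (Finset.sum_le_sum fun i _ => (A i).le_opNorm (u i))
  calc ‖∑ i, A i (u i)‖ ^ 2 ≤ (∑ i, ‖A i‖ * ‖u i‖) ^ 2 := pow_le_pow_left₀ (norm_nonneg _) hle 2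
    _ ≤ (∑ i, ‖A i‖ ^ 2) * ∑ i, ‖u i‖ ^ 2 := Finset.sum_mul_sq_le_sq_mul_sq _ _ _

section Normed

variable {ι H : Type*} [Fintype ι] {G : ι → Type*} [SeminormedAddCommGroup H]
  [∀ i, SeminormedAddCommGroup (G i)]

namespace WithLp

theorem prod_piLp_norm_sq (z : WithLp 2 (H × PiLp 2 G)) :
    ‖z‖ ^ 2 = ‖z.fst‖ ^ 2 + ∑ i, ‖z.snd i‖ ^ 2 := by
  rw [prod_norm_sq_eq_of_L2, PiLp.norm_sq_eq_of_L2]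

theorem prod_piLp_norm_le_mul {K : ℝ} (hK : 0 ≤ K) {z w : WithLp 2 (H × PiLp 2 G)}
    (hfst : ‖z.fst‖ ≤ K * ‖w.fst‖) (hsnd : ∀ i, ‖z.snd i‖ ≤ K * ‖w.snd i‖) : ‖z‖ ≤ K * ‖w‖ := by
  have hsq {a b : ℝ} (h0 : 0 ≤ a) (h : a ≤ K * b) : a ^ 2 ≤ K ^ 2 * b ^ 2 :=
    (pow_le_pow_left₀ h0 h 2).trans_eq (mul_pow _ _ _)
  refine (pow_le_pow_iff_left₀ (norm_nonneg _) (by positivity) two_ne_zero).mp ?_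
  calc ‖z‖ ^ 2 = ‖z.fst‖ ^ 2 + ∑ i, ‖z.snd i‖ ^ 2 := prod_piLp_norm_sq z
    _ ≤ K ^ 2 * ‖w.fst‖ ^ 2 + ∑ i, K ^ 2 * ‖w.snd i‖ ^ 2 :=
      add_le_add (hsq (norm_nonneg _) hfst)
        (Finset.sum_le_sum fun i _ => hsq (norm_nonneg _) (hsnd i))
    _ = (K * ‖w‖) ^ 2 := by rw [← Finset.mul_sum, mul_pow, prod_piLp_norm_sq w]; ring

end WithLp

def blockDiag (M : H → H) (N : ∀ i, G i → G i) (z : WithLp 2 (H × PiLp 2 G)) :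
    WithLp 2 (H × PiLp 2 G) :=
  WithLp.toLp 2 (M z.fst, WithLp.toLp 2 fun i => N i (z.snd i))

theorem norm_blockDiag_sub_le {M : H → H} {N : ∀ i, G i → G i} {K : ℝ} (hK : 0 ≤ K)
    (hM : ∀ x y, ‖M x - M y‖ ≤ K * ‖x - y‖) (hN : ∀ i, ∀ u v : G i, ‖N i u - N i v‖ ≤ K * ‖u - v‖)
    (z w : WithLp 2 (H × PiLp 2 G)) :
    ‖blockDiag M N z - blockDiag M N w‖ ≤ K * ‖z - w‖ :=
  WithLp.prod_piLp_norm_le_mul hK (hM _ _) fun i => hN i _ _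

end Normed

section InnerProduct

variable {ι H : Type*} [Fintype ι] {G : ι → Type*}
  [NormedAddCommGroup H] [InnerProductSpace ℝ H]
  [∀ i, NormedAddCommGroup (G i)] [∀ i, InnerProductSpace ℝ (G i)]

theorem WithLp.prod_piLp_inner (z w : WithLp 2 (H × PiLp 2 G)) :
    ⟪z, w⟫ = ⟪z.fst, w.fst⟫ + ∑ i, ⟪z.snd i, w.snd i⟫ := by
  rw [prod_inner_apply, PiLp.inner_apply]; rfl

theorem inner_sub_blockDiag_sub_nonneg {M : H → H} {N : ∀ i, G i → G i}
    (hM : ∀ x y, 0 ≤ ⟪x - y, M x - M y⟫) (hN : ∀ i, ∀ u v : G i, 0 ≤ ⟪u - v, N i u - N i v⟫)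
    (z w : WithLp 2 (H × PiLp 2 G)) :
    0 ≤ ⟪z - w, blockDiag M N z - blockDiag M N w⟫ := by
  rw [WithLp.prod_piLp_inner]
  exact add_nonneg (hM _ _) (Finset.sum_nonneg fun i _ => hN i _ _)

variable [CompleteSpace H] [∀ i, CompleteSpace (G i)]

noncomputable def blockSkew (L : ∀ i, H →L[ℝ] G i) :
    WithLp 2 (H × PiLp 2 G) →ₗ[ℝ] WithLp 2 (H × PiLp 2 G) where
  toFun z := WithLp.toLp 2 (∑ i, (L i).adjoint (z.snd i), WithLp.toLp 2 fun i => -L i z.fst)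
  map_add' z w := by
    simp only [WithLp.add_fst, WithLp.add_snd, PiLp.add_apply, map_add, Finset.sum_add_distrib,
      neg_add_rev, add_comm, ← WithLp.toLp_add, Prod.mk_add_mk]
    rfl
  map_smul' c z := by
    simp only [WithLp.smul_fst, WithLp.smul_snd, PiLp.smul_apply, map_smul, Real.ringHom_apply,
      ← WithLp.toLp_smul, Prod.smul_mk, Finset.smul_sum, WithLp.toLp.injEq, Prod.mk.injEq, true_and]
    exact funext fun i => (smul_neg c _).symm

theorem inner_self_blockSkew (L : ∀ i, H →L[ℝ] G i) (z : WithLp 2 (H × PiLp 2 G)) :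
    ⟪z, blockSkew L z⟫ = 0 := by
  rw [WithLp.prod_piLp_inner]
  simp [blockSkew, inner_sum, ContinuousLinearMap.adjoint_inner_right, real_inner_comm]

theorem norm_blockSkew_le (L : ∀ i, H →L[ℝ] G i) (z : WithLp 2 (H × PiLp 2 G)) :
    ‖blockSkew L z‖ ≤ √(∑ i, ‖L i‖ ^ 2) * ‖z‖ := by
  have hsq : ‖blockSkew L z‖ ^ 2 ≤ (∑ i, ‖L i‖ ^ 2) * ‖z‖ ^ 2 := calc
    ‖blockSkew L z‖ ^ 2 = ‖∑ i, (L i).adjoint (z.snd i)‖ ^ 2 + ∑ i, ‖L i z.fst‖ ^ 2 := by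
      rw [WithLp.prod_piLp_norm_sq]; simp [blockSkew]
    _ ≤ (∑ i, ‖(L i).adjoint‖ ^ 2) * ∑ i, ‖z.snd i‖ ^ 2 + ∑ i, ‖L i‖ ^ 2 * ‖z.fst‖ ^ 2 :=
      add_le_add (norm_sum_apply_sq_le _ _) <| Finset.sum_le_sum fun i _ =>
        (pow_le_pow_left₀ (norm_nonneg _) ((L i).le_opNorm _) 2).trans_eq (mul_pow _ _ _)
    _ = (∑ i, ‖L i‖ ^ 2) * ‖z‖ ^ 2 := by
      simp only [LinearIsometryEquiv.norm_map]
      rw [WithLp.prod_piLp_norm_sq z, ← Finset.sum_mul]; ring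
  rw [← Real.sqrt_sq (norm_nonneg z), ← Real.sqrt_mul (by positivity)]
  exact Real.le_sqrt_of_sq_le hsq

theorem equiv_symm_eq_blockDiag_add_blockSkew (M : H → H) (N : ∀ i, G i → G i)
    (L : ∀ i, H →L[ℝ] G i) (z : WithLp 2 (H × PiLp 2 G)) :
    (WithLp.equiv 2 (H × PiLp 2 G)).symm (M z.ofLp.1 + ∑ i, (L i).adjoint (z.ofLp.2 i),
      (WithLp.equiv 2 _).symm fun i => N i (z.ofLp.2 i) - L i z.ofLp.1) =
    blockDiag M N z + blockSkew L z := by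
  simp only [WithLp.ofLp_fst, WithLp.ofLp_snd, sub_eq_add_neg, WithLp.equiv_symm_apply, blockDiag,
    blockSkew, LinearMap.coe_mk, AddHom.coe_mk, ← WithLp.toLp_add, Prod.mk_add_mk]
  rfl

end InnerProduct

theorem prod_skew_operator_monotone_lipschitz_general
    {m : ℕ} [NeZero m] {H : Type*} {G : Fin m → Type*}
    [NormedAddCommGroup H] [InnerProductSpace ℝ H] [CompleteSpace H]
    [∀ i, NormedAddCommGroup (G i)] [∀ i, InnerProductSpace ℝ (G i)]
    [∀ i, CompleteSpace (G i)]
    (M : H → H) (N : ∀ i, G i → G i) (Lop : ∀ i, H →L[ℝ] G i)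
    (μ : ℝ) (ν : Fin m → ℝ) (hμ : 0 < μ)
    (hMmon : ∀ x y, 0 ≤ ⟪x - y, M x - M y⟫)
    (hMlip : ∀ x y, ‖M x - M y‖ ≤ μ * ‖x - y‖)
    (hNmon : ∀ i, ∀ u v : G i, 0 ≤ ⟪u - v, N i u - N i v⟫)
    (hNlip : ∀ i, ∀ u v : G i, ‖N i u - N i v‖ ≤ ν i * ‖u - v‖) :
    (∀ z w : WithLp 2 (H × PiLp 2 G),
      0 ≤ ⟪z - w,
        ((WithLp.equiv 2 (H × PiLp 2 G)).symm
          (M z.ofLp.1 + ∑ i, (Lop i).adjoint (z.ofLp.2 i),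
            (WithLp.equiv 2 _).symm fun i => N i (z.ofLp.2 i) - Lop i z.ofLp.1)) -
        ((WithLp.equiv 2 (H × PiLp 2 G)).symm
          (M w.ofLp.1 + ∑ i, (Lop i).adjoint (w.ofLp.2 i),
            (WithLp.equiv 2 _).symm fun i => N i (w.ofLp.2 i) - Lop i w.ofLp.1))⟫) ∧
    (∀ z w : WithLp 2 (H × PiLp 2 G),
      ‖((WithLp.equiv 2 (H × PiLp 2 G)).symm
          (M z.ofLp.1 + ∑ i, (Lop i).adjoint (z.ofLp.2 i),
            (WithLp.equiv 2 _).symm fun i => N i (z.ofLp.2 i) - Lop i z.ofLp.1)) -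
        ((WithLp.equiv 2 (H × PiLp 2 G)).symm
          (M w.ofLp.1 + ∑ i, (Lop i).adjoint (w.ofLp.2 i),
            (WithLp.equiv 2 _).symm fun i => N i (w.ofLp.2 i) - Lop i w.ofLp.1))‖
        ≤ (max μ (Finset.univ.sup' Finset.univ_nonempty ν) +
            Real.sqrt (∑ i, ‖Lop i‖ ^ 2)) * ‖z - w‖) := by
  simp only [equiv_symm_eq_blockDiag_add_blockSkew]
  set K := max μ (Finset.univ.sup' Finset.univ_nonempty ν)
  have hsub (z w : WithLp 2 (H × PiLp 2 G)) :
      blockDiag M N z + blockSkew Lop z - (blockDiag M N w + blockSkew Lop w) =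
        (blockDiag M N z - blockDiag M N w) + blockSkew Lop (z - w) := by
    rw [map_sub]; abel
  have hMK (x y : H) : ‖M x - M y‖ ≤ K * ‖x - y‖ :=
    (hMlip x y).trans (mul_le_mul_of_nonneg_right (le_max_left _ _) (norm_nonneg _))
  have hNK (i) (u v : G i) : ‖N i u - N i v‖ ≤ K * ‖u - v‖ :=
    (hNlip i u v).trans <| mul_le_mul_of_nonneg_right
      ((Finset.le_sup' ν (Finset.mem_univ i)).trans (le_max_right _ _)) (norm_nonneg _)
  refine ⟨fun z w => ?_, fun z w => ?_⟩
  · rw [hsub, inner_add_right, inner_self_blockSkew, add_zero]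
    exact inner_sub_blockDiag_sub_nonneg hMmon hNmon z w
  · rw [hsub, add_mul]
    exact (norm_add_le _ _).trans <| add_le_add
      (norm_blockDiag_sub_le (hμ.le.trans (le_max_left _ _)) hMK hNK z w) (norm_blockSkew_le Lop _)

/-- The operator `B(x,u) = (Mx + Σᵢ Lᵢ* uᵢ, N₁⁻¹u₁ − L₁x, …, N_m⁻¹u_m − L_m x)` on the
Hilbert direct sum is monotone and `L`-Lipschitzian with
`L = max{μ, ν₁,…,ν_m} + √(Σᵢ ‖Lᵢ‖²)`. -/
theorem prod_skew_operator_monotone_lipschitz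
    {m : ℕ} [NeZero m] {H : Type*} {G : Fin m → Type*}
    [NormedAddCommGroup H] [InnerProductSpace ℝ H] [CompleteSpace H]
    [∀ i, NormedAddCommGroup (G i)] [∀ i, InnerProductSpace ℝ (G i)]
    [∀ i, CompleteSpace (G i)]
    (M : H → H) (N : ∀ i, G i → G i) (Lop : ∀ i, H →L[ℝ] G i)
    (μ : ℝ) (ν : Fin m → ℝ) (hμ : 0 < μ) (hν : ∀ i, 0 < ν i)
    (hMmon : ∀ x y, 0 ≤ ⟪x - y, M x - M y⟫)
    (hMlip : ∀ x y, ‖M x - M y‖ ≤ μ * ‖x - y‖)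
    (hNmon : ∀ i, ∀ u v : G i, 0 ≤ ⟪u - v, N i u - N i v⟫)
    (hNlip : ∀ i, ∀ u v : G i, ‖N i u - N i v‖ ≤ ν i * ‖u - v‖) :
    (∀ z w : WithLp 2 (H × PiLp 2 G),
      0 ≤ ⟪z - w,
        ((WithLp.equiv 2 (H × PiLp 2 G)).symm
          (M z.ofLp.1 + ∑ i, (Lop i).adjoint (z.ofLp.2 i),
            (WithLp.equiv 2 _).symm fun i => N i (z.ofLp.2 i) - Lop i z.ofLp.1)) -
        ((WithLp.equiv 2 (H × PiLp 2 G)).symm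
          (M w.ofLp.1 + ∑ i, (Lop i).adjoint (w.ofLp.2 i),
            (WithLp.equiv 2 _).symm fun i => N i (w.ofLp.2 i) - Lop i w.ofLp.1))⟫) ∧
    (∀ z w : WithLp 2 (H × PiLp 2 G),
      ‖((WithLp.equiv 2 (H × PiLp 2 G)).symm
          (M z.ofLp.1 + ∑ i, (Lop i).adjoint (z.ofLp.2 i),
            (WithLp.equiv 2 _).symm fun i => N i (z.ofLp.2 i) - Lop i z.ofLp.1)) -
        ((WithLp.equiv 2 (H × PiLp 2 G)).symm
          (M w.ofLp.1 + ∑ i, (Lop i).adjoint (w.ofLp.2 i),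
            (WithLp.equiv 2 _).symm fun i => N i (w.ofLp.2 i) - Lop i w.ofLp.1))‖
        ≤ (max μ (Finset.univ.sup' Finset.univ_nonempty ν) +
            Real.sqrt (∑ i, ‖Lop i‖ ^ 2)) * ‖z - w‖) :=
  prod_skew_operator_monotone_lipschitz_general M N Lop μ ν hμ hMmon hMlip hNmon hNlip
end

section
/- Let H and K be real Hilbert spaces and A: H → K a bounded linear operator. Then Id + A A* is invertible, and the orthogonal projection onto the subspace V = {(x, w) ∈ H ⊕ K : A x = w} is given by P_V(x, w) = (x − A*(Id + A A*)^{-1}(A x − w), w + (Id + A A*)^{-1}(A x − w)). -/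
open RealInnerProductSpace

/-! The operator `T = 1 + A A*` satisfies `⟪T u, u⟫ = ‖u‖² + ‖A* u‖² ≥ ‖u‖²`, so it is invertible
by Lax–Milgram. Writing `u = T⁻¹ (A x - w)`, the candidate `(x - A* u, w + u)` lies on the graph
because `A A* u = (A x - w) - u`, and the residual `(A* u, -u)` is orthogonal to every
`(x', A x')` since `⟪A* u, x'⟫ = ⟪u, A x'⟫`. -/

theorem IsCoercive.coe_continuousLinearEquivOfBilin_innerSL_comp {V : Type*}
    [NormedAddCommGroup V] [InnerProductSpace ℝ V] [CompleteSpace V] {T : V →L[ℝ] V}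
    (hT : IsCoercive ((innerSL ℝ).comp T)) :
    (hT.continuousLinearEquivOfBilin : V →L[ℝ] V) = T := by
  ext v
  refine ext_inner_right ℝ fun w => ?_
  simp

namespace ContinuousLinearMap

variable {H K : Type*} [NormedAddCommGroup H] [InnerProductSpace ℝ H] [CompleteSpace H]
  [NormedAddCommGroup K] [InnerProductSpace ℝ K] [CompleteSpace K]

theorem inner_id_add_comp_adjoint_apply_self (A : H →L[ℝ] K) (u : K) :
    ⟪(ContinuousLinearMap.id ℝ K + A.comp A.adjoint) u, u⟫ = ‖u‖ ^ 2 + ‖A.adjoint u‖ ^ 2 := by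
  rw [add_apply, inner_add_left, id_apply, comp_apply, ← adjoint_inner_right,
    real_inner_self_eq_norm_sq, real_inner_self_eq_norm_sq]

theorem isCoercive_innerSL_comp_id_add_comp_adjoint (A : H →L[ℝ] K) :
    IsCoercive ((innerSL ℝ).comp (ContinuousLinearMap.id ℝ K + A.comp A.adjoint)) := by
  refine ⟨1, one_pos, fun u => ?_⟩
  rw [comp_apply, innerSL_apply_apply, inner_id_add_comp_adjoint_apply_self]
  nlinarith [sq_nonneg ‖A.adjoint u‖]

noncomputable def idAddCompAdjointEquiv (A : H →L[ℝ] K) : K ≃L[ℝ] K :=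
  A.isCoercive_innerSL_comp_id_add_comp_adjoint.continuousLinearEquivOfBilin

theorem coe_idAddCompAdjointEquiv (A : H →L[ℝ] K) :
    (A.idAddCompAdjointEquiv : K →L[ℝ] K) = ContinuousLinearMap.id ℝ K + A.comp A.adjoint :=
  A.isCoercive_innerSL_comp_id_add_comp_adjoint.coe_continuousLinearEquivOfBilin_innerSL_comp

theorem apply_adjoint_idAddCompAdjointEquiv_symm_apply (A : H →L[ℝ] K) (v : K) :
    A (A.adjoint (A.idAddCompAdjointEquiv.symm v)) = v - A.idAddCompAdjointEquiv.symm v := by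
  have h := congrArg (fun T : K →L[ℝ] K => T (A.idAddCompAdjointEquiv.symm v))
    A.coe_idAddCompAdjointEquiv
  simp only [ContinuousLinearEquiv.coe_coe, ContinuousLinearEquiv.apply_symm_apply, add_apply,
    comp_apply] at h
  exact eq_sub_of_add_eq' h.symm

theorem inner_toLp_adjoint_neg_toLp_graph (A : H →L[ℝ] K) (u : K) (x : H) :
    ⟪WithLp.toLp 2 (A.adjoint u, -u), WithLp.toLp 2 (x, A x)⟫ = 0 := by
  rw [WithLp.prod_inner_apply, adjoint_inner_left, inner_neg_left, add_neg_cancel]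

end ContinuousLinearMap

/-- `Id + A A*` is invertible and the orthogonal projection onto the graph subspace
`V = {(x,w) : A x = w}` of `H ⊕₂ K` is
`P_V(x,w) = (x − A*(Id+AA*)⁻¹(Ax−w), w + (Id+AA*)⁻¹(Ax−w))`, expressed through the
variational characterization of the projection. -/
theorem graph_projection
    {H K : Type*} [NormedAddCommGroup H] [InnerProductSpace ℝ H] [CompleteSpace H]
    [NormedAddCommGroup K] [InnerProductSpace ℝ K] [CompleteSpace K]
    (A : H →L[ℝ] K) :
    ∃ B : K →L[ℝ] K,
      B.comp (ContinuousLinearMap.id ℝ K + A.comp A.adjoint) = ContinuousLinearMap.id ℝ K ∧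
      (ContinuousLinearMap.id ℝ K + A.comp A.adjoint).comp B = ContinuousLinearMap.id ℝ K ∧
      ∀ x : H, ∀ w : K,
        A (x - A.adjoint (B (A x - w))) = w + B (A x - w) ∧
        ∀ x' : H, ∀ w' : K, A x' = w' →
          ⟪(WithLp.equiv 2 (H × K)).symm (x, w) -
              (WithLp.equiv 2 (H × K)).symm
                (x - A.adjoint (B (A x - w)), w + B (A x - w)),
            (WithLp.equiv 2 (H × K)).symm (x', w')⟫ = 0 := by
  set E := A.idAddCompAdjointEquiv
  have hE : (E : K →L[ℝ] K) = ContinuousLinearMap.id ℝ K + A.comp A.adjoint :=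
    A.coe_idAddCompAdjointEquiv
  refine ⟨E.symm, hE ▸ E.coe_symm_comp_coe, hE ▸ E.coe_comp_coe_symm,
    fun x w => ⟨?_, fun x' w' hx' => ?_⟩⟩
  · rw [ContinuousLinearEquiv.coe_coe, map_sub, A.apply_adjoint_idAddCompAdjointEquiv_symm_apply]
    abel
  · subst hx'
    convert A.inner_toLp_adjoint_neg_toLp_graph (E.symm (A x - w)) x' using 2
    · rw [← WithLp.toLp_sub]
      congr 1
      ext <;> simp
    · rfl
end
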